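/- A binary word f is tilde-isometric if and only if its reversal f^rev is tilde-isometric. -/

import Mathlib

/-- Edit operations on binary words: `R i` flips the bit at position `i`,
`S i` swaps the (distinct) bits at positions `i` and `i+1`. Positions are 0-based. -/
inductive TOp where
  | R (i : ℕ)
  | S (i : ℕ)
deriving DecidableEq

namespace TOp

def apply : TOp → List Bool → List Bool
  | R i, w => w.set i (!(w.getD i false))
  | S i, w => (w.set i (w.getD (i+1) false)).set (i+1) (w.getD i false)

def valid : TOp → List Bool → Prop
  | R i, w => i < w.length
  | S i, w => i + 1 < w.length ∧ w.getD i false ≠ w.getD (i+1) false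

/-- The set of positions modified by an operation. -/
def positions : TOp → Finset ℕ
  | R i => {i}
  | S i => {i, i+1}

/-- The (leftmost) position of an operation. -/
def pos : TOp → ℕ
  | R i => i
  | S i => i

def isR : TOp → Prop
  | R _ => True
  | S _ => False

def isS : TOp → Prop
  | R _ => False
  | S _ => True

end TOp

/-- All operations of a sequence are valid when applied successively starting from `w`. -/
def validSeq : List TOp → List Bool → Prop
  | [], _ => True
  | o :: os, w => o.valid w ∧ validSeq os (o.apply w)

def applySeq : List TOp → List Bool → List Bool
  | [], w => w
  | o :: os, w => applySeq os (o.apply w)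

/-- `ops` is a tilde-transformation from `u` to `v`. -/
def Transforms (ops : List TOp) (u v : List Bool) : Prop :=
  validSeq ops u ∧ applySeq ops u = v

/-- The swap-mismatch (tilde) distance between two words. -/
noncomputable def tdist (u v : List Bool) : ℕ :=
  sInf { n | ∃ ops : List TOp, ops.length = n ∧ Transforms ops u v }

/-- Each position of the word is modified at most once along the sequence. -/
def eachPosOnce (ops : List TOp) : Prop :=
  ops.Pairwise fun o o' => Disjoint o.positions o'.positions

/-- A minimal tilde-transformation: length `tdist u v`, each position changed at most once. -/
def MinimalTransf (ops : List TOp) (u v : List Bool) : Prop :=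
  Transforms ops u v ∧ ops.length = tdist u v ∧ eachPosOnce ops

/-- The list of all words `w_0 = u, w_1, …, w_h` visited by the transformation. -/
def trajectory (ops : List TOp) (u : List Bool) : List (List Bool) :=
  List.scanl (fun w o => o.apply w) u ops

/-- `w` avoids `f` as a factor. -/
def FFree (f w : List Bool) : Prop := ¬ f <:+: w

/-- All words along the transformation are `f`-free. -/
def FreeTransf (f : List Bool) (ops : List TOp) (u : List Bool) : Prop :=
  ∀ w ∈ trajectory ops u, FFree f w

/-- `f` is tilde-isometric. -/
def TildeIsometric (f : List Bool) : Prop :=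
  ∀ u v : List Bool, u.length = v.length → f.length < u.length →
    FFree f u → FFree f v →
      ∃ ops : List TOp, MinimalTransf ops u v ∧ FreeTransf f ops u

/-- `(u,v)` is a pair of tilde-witnesses for `f`. -/
def Witnesses (f u v : List Bool) : Prop :=
  u.length = v.length ∧ FFree f u ∧ FFree f v ∧ 2 ≤ tdist u v ∧
    ∀ ops : List TOp, MinimalTransf ops u v → ¬ FreeTransf f ops u

/-- Hamming distance between equal-length words (number of mismatch positions). -/
def hdist (u v : List Bool) : ℕ := ((u.zip v).filter fun p => p.1 != p.2).length


/-!
Reflecting positions, `i ↦ n - 1 - i` for a replacement and `i ↦ n - 2 - i` for a swap in a word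
of length `n`, turns every transformation of `u` into `v` into one of `u.reverse` into
`v.reverse` of the same length, still changing each position at most once, whose intermediate
words are the reversals of the original ones; in particular `tdist` is invariant under reversal.
Since `f` is a factor of `w` exactly when `f.reverse` is a factor of `w.reverse`, mirroring a
minimal `f`-free transformation of `u.reverse` into `v.reverse` gives a minimal
`f.reverse`-free one of `u` into `v`; the converse follows by reversing again.
-/

namespace List

theorem reverse_set_eq {α : Type*} (l : List α) {i : ℕ} (a : α) (h : i < l.length) :
    (l.set i a).reverse = l.reverse.set (l.length - 1 - i) a := by
  refine List.ext_getElem (by simp) fun j _ hj => ?_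
  simp only [length_set, length_reverse] at hj
  simp only [getElem_reverse, getElem_set, length_set]
  by_cases hc : i = l.length - 1 - j
  · rw [if_pos hc, if_pos (by omega)]
  · rw [if_neg hc, if_neg (by omega)]

theorem getD_reverse_sub {α : Type*} (l : List α) {i : ℕ} (d : α) (h : i < l.length) :
    l.reverse.getD (l.length - 1 - i) d = l.getD i d := by
  rw [getD_reverse _ (by omega), Nat.sub_sub_self (by omega)]

end List

namespace TOp

def mirror (n : ℕ) : TOp → TOp
  | R i => R (n - 1 - i)
  | S i => S (n - 2 - i)

theorem length_apply (o : TOp) (w : List Bool) : (o.apply w).length = w.length := by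
  cases o <;> simp [apply]

theorem valid_mirror {o : TOp} {w : List Bool} (hv : o.valid w) :
    (o.mirror w.length).valid w.reverse := by
  cases o with
  | R i =>
    simp only [mirror, valid, List.length_reverse] at hv ⊢
    omega
  | S i =>
    obtain ⟨hi, hne⟩ := hv
    have h1 : w.length - 2 - i + 1 = w.length - 1 - i := by omega
    have h2 : w.length - 1 - (i + 1) = w.length - 2 - i := by omega
    refine ⟨by simp only [List.length_reverse]; omega, ?_⟩
    rw [h1, List.getD_reverse_sub _ _ (by omega), ← h2, List.getD_reverse_sub _ _ hi]
    exact hne.symm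

theorem apply_mirror {o : TOp} {w : List Bool} (hv : o.valid w) :
    (o.mirror w.length).apply w.reverse = (o.apply w).reverse := by
  cases o with
  | R i =>
    have hi : i < w.length := hv
    simp only [mirror, apply]
    rw [List.reverse_set_eq _ _ hi, List.getD_reverse_sub _ _ hi]
  | S i =>
    obtain ⟨hi, -⟩ := hv
    have h1 : w.length - 2 - i + 1 = w.length - 1 - i := by omega
    have h2 : w.length - 1 - (i + 1) = w.length - 2 - i := by omega
    simp only [mirror, apply]
    rw [h1, List.getD_reverse_sub _ _ (by omega), ← h2, List.getD_reverse_sub _ _ hi,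
      List.reverse_set_eq _ _ (by simp [hi]), List.reverse_set_eq _ _ (by omega)]
    simp only [List.length_set, h2]
    rw [List.set_comm _ _ (by omega)]

theorem lt_length_of_mem_positions {o : TOp} {w : List Bool} (hv : o.valid w) :
    ∀ j ∈ o.positions, j < w.length := by
  cases o <;> simp only [positions, valid, Finset.mem_insert, Finset.mem_singleton] at hv ⊢ <;>
    omega

theorem disjoint_positions_mirror {n : ℕ} {o o' : TOp}
    (h : ∀ j ∈ o.positions, j < n) (h' : ∀ j ∈ o'.positions, j < n)
    (hd : Disjoint o.positions o'.positions) :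
    Disjoint (o.mirror n).positions (o'.mirror n).positions := by
  cases o <;> cases o' <;>
    simp only [mirror, positions, Finset.disjoint_left, Finset.mem_insert,
      Finset.mem_singleton, forall_eq_or_imp, forall_eq, not_or] at * <;>
    omega

end TOp

section Mirror

variable {ops : List TOp} {w : List Bool}

theorem validSeq_map_mirror (hv : validSeq ops w) :
    validSeq (ops.map (TOp.mirror w.length)) w.reverse := by
  induction ops generalizing w with
  | nil => trivial
  | cons o os ih =>
    obtain ⟨ho, hos⟩ := hv
    have := ih hos
    rw [TOp.length_apply] at this
    exact ⟨TOp.valid_mirror ho, by rwa [TOp.apply_mirror ho]⟩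

theorem applySeq_map_mirror (hv : validSeq ops w) :
    applySeq (ops.map (TOp.mirror w.length)) w.reverse = (applySeq ops w).reverse := by
  induction ops generalizing w with
  | nil => rfl
  | cons o os ih =>
    obtain ⟨ho, hos⟩ := hv
    have := ih hos
    rw [TOp.length_apply] at this
    simpa only [List.map_cons, applySeq, TOp.apply_mirror ho] using this

theorem trajectory_map_mirror (hv : validSeq ops w) :
    trajectory (ops.map (TOp.mirror w.length)) w.reverse
      = (trajectory ops w).map List.reverse := by
  induction ops generalizing w with
  | nil => simp [trajectory]
  | cons o os ih =>
    obtain ⟨ho, hos⟩ := hv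
    have := ih hos
    rw [TOp.length_apply] at this
    simp only [trajectory, List.map_cons, List.scanl_cons] at this ⊢
    rw [TOp.apply_mirror ho, this]

theorem lt_length_of_validSeq (hv : validSeq ops w) :
    ∀ o ∈ ops, ∀ j ∈ o.positions, j < w.length := by
  induction ops generalizing w with
  | nil => simp
  | cons o os ih =>
    obtain ⟨ho, hos⟩ := hv
    intro o' ho'
    rcases List.mem_cons.mp ho' with rfl | ho'
    · exact TOp.lt_length_of_mem_positions ho
    · simpa only [TOp.length_apply] using ih hos o' ho'

theorem eachPosOnce_map_mirror (hv : validSeq ops w) (h : eachPosOnce ops) :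
    eachPosOnce (ops.map (TOp.mirror w.length)) := by
  have hlt := lt_length_of_validSeq hv
  rw [eachPosOnce, List.pairwise_map]
  exact h.imp_of_mem fun ho ho' => TOp.disjoint_positions_mirror (hlt _ ho) (hlt _ ho')

theorem Transforms.map_mirror {u v : List Bool} (h : Transforms ops u v) :
    Transforms (ops.map (TOp.mirror u.length)) u.reverse v.reverse :=
  ⟨validSeq_map_mirror h.1, by rw [applySeq_map_mirror h.1, h.2]⟩

end Mirror

theorem tdist_reverse (u v : List Bool) : tdist u.reverse v.reverse = tdist u v := by
  have key : ∀ {u v : List Bool} {n : ℕ}, (∃ ops : List TOp, ops.length = n ∧ Transforms ops u v) →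
      ∃ ops : List TOp, ops.length = n ∧ Transforms ops u.reverse v.reverse :=
    fun ⟨ops, hl, h⟩ => ⟨_, by simp [hl], h.map_mirror⟩
  unfold tdist
  congr 1
  ext n
  exact ⟨by simpa using @key u.reverse v.reverse n, key⟩

theorem ffree_reverse_iff (f w : List Bool) : FFree f.reverse w.reverse ↔ FFree f w := by
  rw [FFree, FFree, List.reverse_infix]

theorem TildeIsometric.reverse {f : List Bool} (hf : TildeIsometric f) :
    TildeIsometric f.reverse := by
  intro u v hlen hflen hu hv
  obtain ⟨ops, ⟨hT, hdist, honce⟩, hfree⟩ :=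
    hf u.reverse v.reverse (by simp [hlen]) (by simpa using hflen)
      (by rwa [← ffree_reverse_iff, List.reverse_reverse])
      (by rwa [← ffree_reverse_iff, List.reverse_reverse])
  have hT' := hT.map_mirror
  simp only [List.length_reverse, List.reverse_reverse] at hT'
  refine ⟨ops.map (TOp.mirror u.length), ⟨hT', ?_, ?_⟩, ?_⟩
  · rw [List.length_map, hdist, tdist_reverse]
  · simpa using eachPosOnce_map_mirror hT.1 honce
  · intro x hx
    have htraj := trajectory_map_mirror hT.1
    simp only [List.length_reverse, List.reverse_reverse] at htraj
    obtain ⟨y, hy, rfl⟩ := List.mem_map.mp (htraj ▸ hx)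
    exact (ffree_reverse_iff f y).mpr (hfree y hy)

theorem stmt2 (f : List Bool) : TildeIsometric f ↔ TildeIsometric f.reverse :=
  ⟨TildeIsometric.reverse, fun h => by simpa using h.reverse⟩
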